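/- The open book with page the annulus and trivial monodromy is S¹ × S²: the quotient of (S¹ × [0,1]) × [0,1] by the equivalence relation generated by ((z,r),1) ∼ ((z,r),0) for all (z,r) ∈ S¹ × [0,1] and ((z,e),t) ∼ ((z,e),t′) for all z ∈ S¹, e ∈ {0,1}, t,t′ ∈ [0,1] is homeomorphic to S¹ × S², where S¹ is the unit circle in ℂ and S² is the unit sphere in ℝ³. -/

import Mathlib

set_option maxHeartbeats 1000000

open Real

namespace OpenBookAux

/-- spherical coordinate map: `r` is polar (scaled by π), `t` azimuthal (scaled by 2π). -/
noncomputable def sph (r t : ℝ) : EuclideanSpace ℝ (Fin 3) :=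
  (WithLp.equiv 2 (Fin 3 → ℝ)).symm
    ![Real.sin (π * r) * Real.cos (2 * π * t),
      Real.sin (π * r) * Real.sin (2 * π * t),
      Real.cos (π * r)]

lemma sph_apply_zero (r t : ℝ) : sph r t 0 = Real.sin (π * r) * Real.cos (2 * π * t) := rfl
lemma sph_apply_one (r t : ℝ) : sph r t 1 = Real.sin (π * r) * Real.sin (2 * π * t) := rfl
lemma sph_apply_two (r t : ℝ) : sph r t 2 = Real.cos (π * r) := rfl

lemma norm_sph (r t : ℝ) : ‖sph r t‖ = 1 := by
  rw [EuclideanSpace.norm_eq, Fin.sum_univ_three]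
  rw [sph_apply_zero, sph_apply_one, sph_apply_two]
  simp only [Real.norm_eq_abs, sq_abs]
  rw [show (sin (π * r) * cos (2 * π * t)) ^ 2 + (sin (π * r) * sin (2 * π * t)) ^ 2
      + cos (π * r) ^ 2 = 1 by
    nlinarith [Real.sin_sq_add_cos_sq (2 * π * t), Real.sin_sq_add_cos_sq (π * r)]]
  exact Real.sqrt_one

lemma continuous_sph : Continuous fun p : ℝ × ℝ => sph p.1 p.2 := by
  apply (PiLp.continuous_toLp 2 (fun _ : Fin 3 => ℝ)).comp
  apply continuous_pi
  intro i
  fin_cases i <;> simp <;> fun_prop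

lemma sph_one_eq_sph_zero (r : ℝ) : sph r 1 = sph r 0 := by
  simp [sph, mul_one, mul_zero, Real.cos_two_pi, Real.sin_two_pi]

lemma sph_boundary {r : ℝ} (h : r = 0 ∨ r = 1) (t t' : ℝ) : sph r t = sph r t' := by
  rcases h with h | h <;> subst h <;> simp [sph, Real.sin_pi]

/-- key injectivity statement -/
lemma sph_inj {r t r' t' : ℝ} (hr : r ∈ Set.Icc (0:ℝ) 1) (hr' : r' ∈ Set.Icc (0:ℝ) 1)
    (ht : t ∈ Set.Icc (0:ℝ) 1) (ht' : t' ∈ Set.Icc (0:ℝ) 1)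
    (h : sph r t = sph r' t') :
    r = r' ∧ (r = 0 ∨ r = 1 ∨ t = t' ∨ (t = 1 ∧ t' = 0) ∨ (t = 0 ∧ t' = 1)) := by
  have h0 := congrFun (congrArg (WithLp.equiv 2 (Fin 3 → ℝ)) h) 0
  have h1 := congrFun (congrArg (WithLp.equiv 2 (Fin 3 → ℝ)) h) 1
  have h2 := congrFun (congrArg (WithLp.equiv 2 (Fin 3 → ℝ)) h) 2
  have e0 : sin (π * r) * cos (2 * π * t) = sin (π * r') * cos (2 * π * t') := h0
  have e1 : sin (π * r) * sin (2 * π * t) = sin (π * r') * sin (2 * π * t') := h1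
  have e2 : cos (π * r) = cos (π * r') := h2
  have hπ := Real.pi_pos
  have hrr : r = r' := by
    have := Real.injOn_cos ⟨by nlinarith [hr.1], by nlinarith [hr.2]⟩
      ⟨by nlinarith [hr'.1], by nlinarith [hr'.2]⟩ e2
    nlinarith [this]
  refine ⟨hrr, ?_⟩
  subst hrr
  by_cases hb : r = 0 ∨ r = 1
  · tauto
  push_neg at hb
  have hr0 : 0 < r := lt_of_le_of_ne hr.1 (Ne.symm hb.1)
  have hr1 : r < 1 := lt_of_le_of_ne hr.2 hb.2
  have hs : 0 < sin (π * r) := Real.sin_pos_of_pos_of_lt_pi (by positivity) (by nlinarith)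
  have hc : cos (2 * π * t) = cos (2 * π * t') := mul_left_cancel₀ (ne_of_gt hs) e0
  have hsn : sin (2 * π * t) = sin (2 * π * t') := mul_left_cancel₀ (ne_of_gt hs) e1
  -- turn into complex exponentials
  have hexp : Complex.exp ((2 * π * t : ℝ) * Complex.I)
      = Complex.exp ((2 * π * t' : ℝ) * Complex.I) := by
    apply Complex.ext
    · rw [Complex.exp_ofReal_mul_I_re, Complex.exp_ofReal_mul_I_re]; exact hc
    · rw [Complex.exp_ofReal_mul_I_im, Complex.exp_ofReal_mul_I_im]; exact hsn
  obtain ⟨n, hn⟩ := Complex.exp_eq_exp_iff_exists_int.mp hexp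
  have hn' : (2 * π * t : ℝ) = 2 * π * t' + n * (2 * π) := by
    have := congrArg Complex.im hn
    simpa using this
  have htt : t = t' + n := by
    have h2π : (2 * π) ≠ 0 := by positivity
    apply mul_left_cancel₀ h2π
    linear_combination hn'
  have hnle : (n : ℝ) = t - t' := by rw [htt]; ring
  have : (-1 : ℝ) ≤ n ∧ (n : ℝ) ≤ 1 := by
    constructor <;> rw [hnle] <;> [nlinarith [ht.1, ht'.2]; nlinarith [ht.2, ht'.1]]
  have hnint : n = -1 ∨ n = 0 ∨ n = 1 := by
    have h1 : (-1 : ℤ) ≤ n := by exact_mod_cast this.1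
    have h2 : n ≤ (1 : ℤ) := by exact_mod_cast this.2
    omega
  rcases hnint with h | h | h
  · subst h
    push_cast at htt
    right; right; right; right
    exact ⟨by linarith [ht.1, ht'.2], by linarith [ht.1, ht'.2]⟩
  · subst h
    right; right; left
    simpa using htt
  · subst h
    push_cast at htt
    right; right; right; left
    exact ⟨by linarith [ht.2, ht'.1], by linarith [ht.2, ht'.1]⟩

/-- surjectivity -/
lemma sph_surj (v : EuclideanSpace ℝ (Fin 3)) (hv : ‖v‖ = 1) :
    ∃ r t : ℝ, r ∈ Set.Icc (0:ℝ) 1 ∧ t ∈ Set.Icc (0:ℝ) 1 ∧ sph r t = v := by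
  have hπ := Real.pi_pos
  have hsum : v 0 ^ 2 + v 1 ^ 2 + v 2 ^ 2 = 1 := by
    have h := hv
    rw [EuclideanSpace.norm_eq, Fin.sum_univ_three] at h
    have h2 : ‖v 0‖ ^ 2 + ‖v 1‖ ^ 2 + ‖v 2‖ ^ 2 = 1 := by
      nlinarith [Real.sq_sqrt (show (0:ℝ) ≤ ‖v 0‖ ^ 2 + ‖v 1‖ ^ 2 + ‖v 2‖ ^ 2 by positivity), h]
    simpa [Real.norm_eq_abs, sq_abs] using h2
  set c := v 2 with hcdef
  have hc1 : -1 ≤ c ∧ c ≤ 1 := by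
    constructor <;> nlinarith [sq_nonneg (v 0), sq_nonneg (v 1)]
  set r := Real.arccos c / π with hrdef
  have hrmem : r ∈ Set.Icc (0:ℝ) 1 := by
    constructor
    · exact div_nonneg (Real.arccos_nonneg c) hπ.le
    · rw [div_le_one hπ]; exact Real.arccos_le_pi c
  have hπr : π * r = Real.arccos c := by rw [hrdef]; field_simp
  have hcos : cos (π * r) = c := by rw [hπr]; exact Real.cos_arccos hc1.1 hc1.2
  have hsin : sin (π * r) = Real.sqrt (1 - c ^ 2) := by rw [hπr]; exact Real.sin_arccos c
  have hρsq : Real.sqrt (1 - c ^ 2) ^ 2 = v 0 ^ 2 + v 1 ^ 2 := by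
    rw [Real.sq_sqrt (by nlinarith [sq_nonneg (v 0), sq_nonneg (v 1)])]; nlinarith
  set ρ := Real.sqrt (1 - c ^ 2) with hρdef
  have hρ0 : 0 ≤ ρ := Real.sqrt_nonneg _
  by_cases hρ : ρ = 0
  · refine ⟨r, 0, hrmem, ⟨le_refl 0, zero_le_one⟩, ?_⟩
    have hv0 : v 0 = 0 := by nlinarith [sq_nonneg (v 0), sq_nonneg (v 1)]
    have hv1 : v 1 = 0 := by nlinarith [sq_nonneg (v 0), sq_nonneg (v 1)]
    have hA : sph r 0 0 = v 0 := by rw [sph_apply_zero, hsin, hρ, hv0]; ring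
    have hB : sph r 0 1 = v 1 := by rw [sph_apply_one, hsin, hρ, hv1]; ring
    have hC : sph r 0 2 = v 2 := by rw [sph_apply_two, hcos]
    ext i
    fin_cases i
    · exact hA
    · exact hB
    · exact hC
  · have hρpos : 0 < ρ := lt_of_le_of_ne hρ0 (Ne.symm hρ)
    set a := v 0 / ρ with hadef
    set b := v 1 / ρ with hbdef
    have hab : a ^ 2 + b ^ 2 = 1 := by
      rw [hadef, hbdef, div_pow, div_pow, ← add_div, div_eq_one_iff_eq (pow_pos hρpos 2).ne']
      linarith [hρsq]
    have ha1 : -1 ≤ a ∧ a ≤ 1 := by constructor <;> nlinarith [sq_nonneg b]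
    set θ := if 0 ≤ b then Real.arccos a else 2 * π - Real.arccos a with hθdef
    have hθcos : cos θ = a := by
      rw [hθdef]; split
      · exact Real.cos_arccos ha1.1 ha1.2
      · rw [Real.cos_two_pi_sub]; exact Real.cos_arccos ha1.1 ha1.2
    have hsqb : Real.sqrt (1 - a ^ 2) = |b| := by
      rw [show 1 - a ^ 2 = b ^ 2 by nlinarith, Real.sqrt_sq_eq_abs]
    have hθsin : sin θ = b := by
      rw [hθdef]; split
      · rw [Real.sin_arccos, hsqb, abs_of_nonneg ‹0 ≤ b›]
      · rw [Real.sin_two_pi_sub, Real.sin_arccos, hsqb,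
          abs_of_neg (lt_of_not_ge ‹¬ 0 ≤ b›)]; ring
    have hθmem : 0 ≤ θ ∧ θ ≤ 2 * π := by
      rw [hθdef]; split
      · exact ⟨Real.arccos_nonneg a, by nlinarith [Real.arccos_le_pi a]⟩
      · exact ⟨by nlinarith [Real.arccos_le_pi a], by nlinarith [Real.arccos_nonneg a]⟩
    refine ⟨r, θ / (2 * π), hrmem, ⟨div_nonneg hθmem.1 (by positivity),
      by rw [div_le_one (by positivity)]; exact hθmem.2⟩, ?_⟩
    have h2πt : 2 * π * (θ / (2 * π)) = θ := by field_simp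
    have hA : sph r (θ / (2 * π)) 0 = v 0 := by
      rw [sph_apply_zero, h2πt, hθcos, hsin, hadef]; field_simp
    have hB : sph r (θ / (2 * π)) 1 = v 1 := by
      rw [sph_apply_one, h2πt, hθsin, hsin, hbdef]; field_simp
    have hC : sph r (θ / (2 * π)) 2 = v 2 := by rw [sph_apply_two, hcos]
    ext i
    fin_cases i
    · exact hA
    · exact hB
    · exact hC


abbrev Src := (Metric.sphere (0:ℂ) 1 × Set.Icc (0:ℝ) 1) × Set.Icc (0:ℝ) 1

abbrev Tgt := Metric.sphere (0:ℂ) 1 × Metric.sphere (0 : EuclideanSpace ℝ (Fin 3)) 1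

def Rel (p q : Src) : Prop :=
  (p.2.1 = 1 ∧ q.2.1 = 0 ∧ q.1 = p.1) ∨ ((p.1.2.1 = 0 ∨ p.1.2.1 = 1) ∧ q.1 = p.1)

lemma mem_sph (r t : ℝ) : sph r t ∈ Metric.sphere (0 : EuclideanSpace ℝ (Fin 3)) 1 := by
  have : dist (sph r t) 0 = 1 := by rw [dist_zero_right]; exact norm_sph r t
  exact this

noncomputable def F (p : Src) : Tgt :=
  (p.1.1, ⟨sph p.1.2.1 p.2.1, mem_sph _ _⟩)

@[fun_prop]
lemma continuous_sph2 : Continuous (Function.uncurry sph) := continuous_sph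

lemma F_cont : Continuous F := by
  unfold F
  have h : ∀ a b : ℝ, sph a b = Function.uncurry sph (a, b) := fun _ _ => rfl
  simp only [h]
  fun_prop

lemma F_resp : ∀ p q : Src, Rel p q → F p = F q := by
  rintro ⟨⟨z, r⟩, t⟩ ⟨⟨z', r'⟩, t'⟩ (⟨h1, h0, he⟩ | ⟨hb, he⟩)
  · have hz : z' = z := congrArg Prod.fst he
    have hr : r' = r := congrArg Prod.snd he
    subst hz; subst hr
    refine Prod.ext rfl (Subtype.ext ?_)
    show sph r'.1 t.1 = sph r'.1 t'.1
    rw [show (t:ℝ) = 1 from h1, show (t':ℝ) = 0 from h0]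
    exact sph_one_eq_sph_zero _
  · have hz : z' = z := congrArg Prod.fst he
    have hr : r' = r := congrArg Prod.snd he
    subst hz; subst hr
    refine Prod.ext rfl (Subtype.ext ?_)
    exact sph_boundary hb t.1 t'.1

noncomputable def G : Quot Rel → Tgt := Quot.lift F F_resp

lemma G_cont : Continuous G := continuous_quot_lift _ F_cont

lemma G_inj : Function.Injective G := by
  intro x y
  refine Quot.induction_on₂ x y ?_
  rintro ⟨⟨z, r⟩, t⟩ ⟨⟨z', r'⟩, t'⟩ h
  simp only [G, Quot.lift, F, Prod.mk.injEq] at h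
  obtain ⟨hz, hs⟩ := h
  have hs' : sph r.1 t.1 = sph r'.1 t'.1 := congrArg Subtype.val hs
  obtain ⟨hrr, hcases⟩ := sph_inj r.2 r'.2 t.2 t'.2 hs'
  have hr' : r = r' := Subtype.ext hrr
  subst hr'; subst hz
  rcases hcases with h | h | h | ⟨h1, h0⟩ | ⟨h1, h0⟩
  · exact Quot.sound (Or.inr ⟨Or.inl h, rfl⟩)
  · exact Quot.sound (Or.inr ⟨Or.inr h, rfl⟩)
  · rw [Subtype.ext h]
  · exact Quot.sound (Or.inl ⟨h1, h0, rfl⟩)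
  · have hres : Rel ((z, r), t') ((z, r), t) := Or.inl ⟨h0, h1, rfl⟩
    exact (Quot.sound hres).symm

lemma G_surj : Function.Surjective G := by
  rintro ⟨z, v, hv⟩
  rw [mem_sphere_zero_iff_norm] at hv
  obtain ⟨r, t, hr, ht, hsph⟩ := sph_surj v hv
  refine ⟨Quot.mk Rel ((z, ⟨r, hr⟩), ⟨t, ht⟩), ?_⟩
  exact Prod.ext rfl (Subtype.ext hsph)

instance : CompactSpace (Quot Rel) := by
  constructor
  rw [← Set.range_quot_mk Rel]
  exact isCompact_range continuous_quot_mk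

noncomputable def mainHomeo : Quot Rel ≃ₜ Tgt :=
  Continuous.homeoOfEquivCompactToT2 (f := Equiv.ofBijective G ⟨G_inj, G_surj⟩) G_cont

end OpenBookAux

/-- The open book with page the annulus `S¹ × [0,1]` and trivial monodromy
is `S¹ × S²`. -/
theorem open_book_of_annulus_id :
    Nonempty (
      -- the open book Ob(S¹ × [0,1], S¹ × {0,1}, id)
      Quot (fun p q : (Metric.sphere (0:ℂ) 1 × Set.Icc (0:ℝ) 1) × Set.Icc (0:ℝ) 1 =>
        (p.2.1 = 1 ∧ q.2.1 = 0 ∧ q.1 = p.1) ∨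
        ((p.1.2.1 = 0 ∨ p.1.2.1 = 1) ∧ q.1 = p.1))
      ≃ₜ
      -- S¹ × S²
      Metric.sphere (0:ℂ) 1 × Metric.sphere (0 : EuclideanSpace ℝ (Fin 3)) 1) :=
  ⟨OpenBookAux.mainHomeo⟩
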